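/- Let A = [[1,1],[0,1]] and B = [[1,0],[2−z,1]] in SL(2,ℂ), and let m ≥ 1. The (2,1)-entry of (A⁻¹B)^m(AB⁻¹)^m equals −(z−2)²·S_{m−1}(z)², its (1,2)-entry equals (z−2)·S_{m−1}(z)², its (1,1)-entry equals S_m(z)² − 2S_m(z)S_{m−1}(z) + (3−z)S_{m−1}(z)², and its (2,2)-entry equals S_m(z)² + (2−2z)S_m(z)S_{m−1}(z) + (3−3z+z²)S_{m−1}(z)². -/

import Mathlib

noncomputable def S : ℕ → ℂ → ℂ
  | 0 => fun _ => 1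
  | 1 => fun q => q
  | (n + 2) => fun q => q * S (n + 1) q - S n q

/-!
Both `A⁻¹ B` and `A B⁻¹` have trace `z` and determinant `1`, so by Cayley–Hamilton each satisfies
`X² = z X - 1`, and hence `X^m = S_{m-1}(z) X - S_{m-2}(z)`. Multiplying the two expansions and
eliminating `S_{m-2} = z S_{m-1} - S_m` leaves polynomial identities in `S_m(z)` and `S_{m-1}(z)`.
-/

open Polynomial

theorem S_eq_eval_chebyshev_S (n : ℕ) (q : ℂ) : S n q = (Chebyshev.S ℂ n).eval q := by
  induction n using Nat.twoStepInduction with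
  | zero => simp [S]
  | one => simp [S]
  | more n ih₀ ih₁ =>
    simp only [S, ih₀, ih₁]
    push_cast
    simp [Chebyshev.S_add_two]

namespace Polynomial.Chebyshev

-- `S R (-1) = 0` and `S R (-2) = -1` make the formula hold at `n = 0` and `n = 1` too.
theorem pow_eq_eval_S_smul_sub {R A : Type*} [CommRing R] [Ring A] [Algebra R A] {a : A} {t : R}
    (ha : a ^ 2 = t • a - 1) (n : ℕ) :
    a ^ n = (S R (n - 1)).eval t • a - (S R (n - 2)).eval t • 1 := by
  induction n with
  | zero => simp
  | succ n ih =>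
    have hS : S R n = X * S R (n - 1) - S R (n - 2) := by
      simpa [sub_sub, one_add_one_eq_two] using S_add_one R ((n : ℤ) - 1)
    rw [pow_succ, ih, sub_mul, smul_mul_assoc, smul_mul_assoc, ← sq, ha, one_mul]
    push_cast
    rw [add_sub_cancel_right, show (n : ℤ) + 1 - 2 = n - 1 by ring, hS]
    simp only [eval_sub, eval_mul, eval_X]
    module

end Polynomial.Chebyshev

namespace Matrix

variable {R : Type*} [CommRing R]

theorem sq_eq_trace_smul_sub_det_smul (M : Matrix (Fin 2) (Fin 2) R) :
    M ^ 2 = M.trace • M - M.det • 1 := by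
  ext i j
  fin_cases i <;> fin_cases j <;> simp [sq, mul_apply, trace_fin_two, det_fin_two] <;> ring

theorem sq_eq_smul_sub_one_of_trace_of_det {M : Matrix (Fin 2) (Fin 2) R} {t : R}
    (ht : M.trace = t) (hd : M.det = 1) : M ^ 2 = t • M - 1 := by
  rw [M.sq_eq_trace_smul_sub_det_smul, ht, hd, one_smul]

end Matrix

theorem stmt_17 (m : ℕ) (hm : 0 < m) (z : ℂ)
    (A B : Matrix (Fin 2) (Fin 2) ℂ)
    (hA : A = !![1, 1; 0, 1]) (hB : B = !![1, 0; 2 - z, 1]) :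
    ((A⁻¹ * B) ^ m * (A * B⁻¹) ^ m) 1 0 = -(z - 2) ^ 2 * S (m - 1) z ^ 2 ∧
    ((A⁻¹ * B) ^ m * (A * B⁻¹) ^ m) 0 1 = (z - 2) * S (m - 1) z ^ 2 ∧
    ((A⁻¹ * B) ^ m * (A * B⁻¹) ^ m) 0 0 =
      S m z ^ 2 - 2 * S m z * S (m - 1) z + (3 - z) * S (m - 1) z ^ 2 ∧
    ((A⁻¹ * B) ^ m * (A * B⁻¹) ^ m) 1 1 =
      S m z ^ 2 + (2 - 2 * z) * S m z * S (m - 1) z +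
        (3 - 3 * z + z ^ 2) * S (m - 1) z ^ 2 := by
  have hP : A⁻¹ * B = !![z - 1, -1; 2 - z, 1] := by
    simp [hA, hB, Matrix.inv_def, Matrix.adjugate_fin_two_of, Matrix.det_fin_two_of]
    ring
  have hQ : A * B⁻¹ = !![z - 1, 1; z - 2, 1] := by
    simp [hA, hB, Matrix.inv_def, Matrix.adjugate_fin_two_of, Matrix.det_fin_two_of]
    ring
  have hP2 : (A⁻¹ * B) ^ 2 = z • (A⁻¹ * B) - 1 :=
    Matrix.sq_eq_smul_sub_one_of_trace_of_det (by simp [hP])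
      (by simp [hP, Matrix.det_fin_two_of]; ring)
  have hQ2 : (A * B⁻¹) ^ 2 = z • (A * B⁻¹) - 1 :=
    Matrix.sq_eq_smul_sub_one_of_trace_of_det (by simp [hQ])
      (by simp [hQ, Matrix.det_fin_two_of]; ring)
  obtain ⟨n, rfl⟩ := Nat.exists_eq_add_of_lt hm
  rw [Chebyshev.pow_eq_eval_S_smul_sub hP2, Chebyshev.pow_eq_eval_S_smul_sub hQ2, hP, hQ]
  simp only [zero_add, add_tsub_cancel_right, S_eq_eval_chebyshev_S]
  push_cast
  rw [add_sub_cancel_right, show (n : ℤ) + 1 - 2 = n - 1 by ring, Chebyshev.S_sub_one]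
  simp only [eval_sub, eval_mul, eval_X]
  refine ⟨?_, ?_, ?_, ?_⟩ <;> simp [Matrix.mul_apply, Fin.sum_univ_two] <;> ring
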